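/- For every natural number n, the identity ∑_{k=0}^n C(6k,3k) * C(3k,k) * C(2k,k) * C(k, n-k) * (-432)^(n-k) = ∑_{k=0}^n C(6k,3k) * C(3k,k) * C(6(n-k), 3(n-k)) * C(3(n-k), n-k) holds. -/

import Mathlib

/-!
Both sides are sums of hypergeometric terms in `(n, k)`, and Zeilberger's creative telescoping
shows that each satisfies the same second-order recurrence
`(n + 2)³ a(n + 2) - 24 (2n + 3)(18n² + 54n + 41) a(n + 1) + 20736 (n + 1)(3n + 1)(3n + 5) a(n) = 0`.
Since the leading coefficient never vanishes and the two sides agree for `n = 0, 1`, they agree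
for all `n`.
-/

open Finset Nat

section Recurrence

variable {R : Type*} [CommRing R]

theorem eq_of_recurrence_two [IsDomain R] {u v p q r : ℕ → R} (hp : ∀ n, p n ≠ 0)
    (hu : ∀ n, p n * u (n + 2) + q n * u (n + 1) + r n * u n = 0)
    (hv : ∀ n, p n * v (n + 2) + q n * v (n + 1) + r n * v n = 0)
    (h0 : u 0 = v 0) (h1 : u 1 = v 1) (n : ℕ) : u n = v n := by
  induction n using Nat.twoStepInduction with
  | zero => exact h0
  | one => exact h1
  | more n ih0 ih1 =>
    refine mul_left_cancel₀ (hp n) ?_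
    linear_combination hu n - hv n - q n * ih1 - r n * ih0

/-- Creative telescoping; `hbdry` accounts for the terms `k = n + 1, n + 2` of the sums that
`htel` does not cover. -/
theorem recurrence_sum_of_telescoping {F G : ℕ → ℕ → R} {p q r : ℕ → R}
    (htel : ∀ n k, k ≤ n →
      p n * F (n + 2) k + q n * F (n + 1) k + r n * F n k = G n (k + 1) - G n k)
    (hG₀ : ∀ n, G n 0 = 0)
    (hbdry : ∀ n,
      G n (n + 1) + p n * (F (n + 2) (n + 1) + F (n + 2) (n + 2)) + q n * F (n + 1) (n + 1) = 0)
    (n : ℕ) :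
    p n * ∑ k ∈ range (n + 3), F (n + 2) k + q n * ∑ k ∈ range (n + 2), F (n + 1) k
      + r n * ∑ k ∈ range (n + 1), F n k = 0 := by
  have hsum : ∑ k ∈ range (n + 1), (p n * F (n + 2) k + q n * F (n + 1) k + r n * F n k)
      = G n (n + 1) := by
    rw [sum_congr rfl fun k hk => htel n k (Nat.lt_succ_iff.mp (mem_range.mp hk)),
      sum_range_sub, hG₀, sub_zero]
  rw [sum_add_distrib, sum_add_distrib, ← mul_sum, ← mul_sum, ← mul_sum] at hsum
  rw [sum_range_succ _ (n + 2), sum_range_succ _ (n + 1), sum_range_succ _ (n + 1)]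
  linear_combination hsum + hbdry n

end Recurrence

section Choose

variable {K : Type*} [Field K] [CharZero K]

theorem cast_choose_succ_right (n k : ℕ) :
    (n.choose (k + 1) : K) = n.choose k * (n - k) / (k + 1) := by
  rw [eq_div_iff (cast_add_one_ne_zero k)]
  rcases le_or_gt k n with h | h
  · exact_mod_cast choose_succ_right_eq n k
  · simp [choose_eq_zero_of_lt h, choose_eq_zero_of_lt (by omega : n < k + 1)]

theorem cast_choose_eq_succ_choose (n k : ℕ) :
    (n.choose k : K) = (n + 1 - k) * (n + 1).choose k / (n + 1) := by
  rw [eq_div_iff (cast_add_one_ne_zero n)]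
  rcases le_or_gt k (n + 1) with h | h
  · rw [mul_comm _ ((n + 1).choose k : K)]
    exact_mod_cast choose_mul_succ_eq n k
  · simp [choose_eq_zero_of_lt h, choose_eq_zero_of_lt (by omega : n < k)]

theorem cast_choose_eq_succ_choose_succ (n k : ℕ) :
    (n.choose k : K) = (k + 1) * (n + 1).choose (k + 1) / (n + 1) := by
  rw [eq_div_iff (cast_add_one_ne_zero n), mul_comm, mul_comm (k + 1 : K)]
  exact_mod_cast add_one_mul_choose_eq n k

theorem cast_centralBinom_succ (n : ℕ) :
    (centralBinom (n + 1) : K) = 2 * (2 * n + 1) * centralBinom n / (n + 1) := by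
  rw [eq_div_iff (cast_add_one_ne_zero n), mul_comm]
  exact_mod_cast succ_mul_centralBinom_succ n

end Choose

def multinom (k : ℕ) : ℚ := (6 * k).choose (3 * k) * (3 * k).choose k

theorem multinom_eq_factorial_div (k : ℕ) : multinom k = (6 * k)! / ((3 * k)! * (2 * k)! * k !) := by
  rw [multinom, cast_choose ℚ (by omega : 3 * k ≤ 6 * k), cast_choose ℚ (by omega : k ≤ 3 * k),
    show 6 * k - 3 * k = 3 * k by omega, show 3 * k - k = 2 * k by omega]
  field_simp

theorem multinom_succ (k : ℕ) :
    multinom (k + 1) = 12 * (6 * k + 1) * (6 * k + 5) * multinom k / (k + 1) ^ 2 := by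
  rw [multinom_eq_factorial_div, multinom_eq_factorial_div, show 6 * (k + 1) = 6 * k + 5 + 1 by ring,
    show 3 * (k + 1) = 3 * k + 2 + 1 by ring, show 2 * (k + 1) = 2 * k + 1 + 1 by ring]
  simp only [factorial_succ, cast_mul, cast_add, cast_ofNat, cast_one]
  field_simp
  ring

theorem multinom_zero : multinom 0 = 1 := by
  simp [multinom]

theorem multinom_one : multinom 1 = 60 := by
  rw [multinom_eq_factorial_div]
  norm_num [factorial]

-- The recurrence and the certificates `rhsCert`, `lhsCert` come from Zeilberger's algorithm.
def recP (n : ℕ) : ℚ := (n + 2) ^ 3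

def recQ (n : ℕ) : ℚ := -24 * (2 * n + 3) * (18 * n ^ 2 + 54 * n + 41)

def recR (n : ℕ) : ℚ := 20736 * (n + 1) * (3 * n + 1) * (3 * n + 5)

def rhsTerm (n k : ℕ) : ℚ := multinom k * multinom (n - k)

def rhsCert (n k : ℕ) : ℚ :=
  let x : ℚ := n
  let y : ℚ := k
  y ^ 2 * ((1296 * x ^ 4 + 5940 * x ^ 3 + 8928 * x ^ 2 + 4749 * x + 570)
      - y * (3888 * x ^ 3 + 14112 * x ^ 2 + 15264 * x + 4414)
      + y ^ 2 * (3888 * x ^ 2 + 10404 * x + 6336) - y ^ 3 * (1296 * x + 2232))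
    * multinom k * multinom (n + 2 - k)
    / ((6 * (x - y) + 1) * (6 * (x - y) + 5) * (6 * (x - y) + 7) * (6 * (x - y) + 11))

theorem six_mul_add_ne_zero (m r : ℤ) (hr : ¬ 6 ∣ r) : 6 * (m : ℚ) + r ≠ 0 := by
  exact_mod_cast fun h : 6 * m + r = 0 => hr ⟨-m, by omega⟩

theorem rhsTerm_telescoping (n k : ℕ) (hk : k ≤ n) :
    recP n * rhsTerm (n + 2) k + recQ n * rhsTerm (n + 1) k + recR n * rhsTerm n k
      = rhsCert n (k + 1) - rhsCert n k := by
  obtain ⟨j, rfl⟩ : ∃ j, n = k + j := ⟨n - k, by omega⟩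
  simp only [rhsTerm, rhsCert, recP, recQ, recR, show k + j + 2 - k = j + 2 by omega,
    show k + j + 1 - k = j + 1 by omega, show k + j - k = j by omega,
    show k + j + 2 - (k + 1) = j + 1 by omega]
  push_cast
  rw [show (k : ℚ) + j - k = j by ring, show (k : ℚ) + j - (k + 1) = j - 1 by ring]
  have : 6 * ((j : ℚ) - 1) + 1 ≠ 0 := by exact_mod_cast six_mul_add_ne_zero (j - 1) 1 (by decide)
  have : 6 * ((j : ℚ) - 1) + 5 ≠ 0 := by exact_mod_cast six_mul_add_ne_zero (j - 1) 5 (by decide)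
  have : 6 * ((j : ℚ) - 1) + 7 ≠ 0 := by exact_mod_cast six_mul_add_ne_zero (j - 1) 7 (by decide)
  have : 6 * ((j : ℚ) - 1) + 11 ≠ 0 := by exact_mod_cast six_mul_add_ne_zero (j - 1) 11 (by decide)
  rw [multinom_succ (j + 1), multinom_succ j, multinom_succ k]
  push_cast
  field_simp
  ring

theorem rhsCert_zero (n : ℕ) : rhsCert n 0 = 0 := by
  simp [rhsCert]

theorem rhsCert_boundary (n : ℕ) :
    rhsCert n (n + 1) + recP n * (rhsTerm (n + 2) (n + 1) + rhsTerm (n + 2) (n + 2))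
      + recQ n * rhsTerm (n + 1) (n + 1) = 0 := by
  simp only [rhsCert, rhsTerm, recP, recQ, show n + 2 - (n + 1) = 1 by omega, Nat.sub_self]
  rw [multinom_succ (n + 1), multinom_zero, multinom_one]
  push_cast
  field_simp
  ring

def lhsTerm (n k : ℕ) : ℚ := multinom k * centralBinom k * k.choose (n - k) * (-432) ^ (n - k)

def lhsCert (n k : ℕ) : ℚ :=
  -((n + 2) * (n - 2 * k) * (n + 1 - 2 * k) * k ^ 2 * multinom k * centralBinom k
      * (k + 2).choose (n + 2 - k) * (-432) ^ (n + 2 - k)) / ((k + 1) * (k + 2))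

theorem lhsTerm_telescoping (n k : ℕ) (hk : k ≤ n) :
    recP n * lhsTerm (n + 2) k + recQ n * lhsTerm (n + 1) k + recR n * lhsTerm n k
      = lhsCert n (k + 1) - lhsCert n k := by
  obtain ⟨j, rfl⟩ : ∃ j, n = k + j := ⟨n - k, by omega⟩
  simp only [lhsTerm, lhsCert, recP, recQ, recR, show k + j + 2 - k = j + 2 by omega,
    show k + j + 1 - k = j + 1 by omega, show k + j - k = j by omega,
    show k + j + 2 - (k + 1) = j + 1 by omega, show k + 1 + 2 = k + 3 by omega]
  rw [cast_choose_succ_right k (j + 1), cast_choose_succ_right k j,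
    cast_choose_eq_succ_choose k j, cast_choose_eq_succ_choose (k + 1) j,
    cast_choose_eq_succ_choose_succ (k + 2) j, cast_choose_succ_right (k + 2) (j + 1),
    cast_choose_eq_succ_choose (k + 2) (j + 1), multinom_succ, cast_centralBinom_succ]
  push_cast
  field_simp
  ring

theorem lhsCert_zero (n : ℕ) : lhsCert n 0 = 0 := by
  simp [lhsCert]

theorem lhsCert_boundary (n : ℕ) :
    lhsCert n (n + 1) + recP n * (lhsTerm (n + 2) (n + 1) + lhsTerm (n + 2) (n + 2))
      + recQ n * lhsTerm (n + 1) (n + 1) = 0 := by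
  simp only [lhsCert, lhsTerm, recP, recQ, show n + 2 - (n + 1) = 1 by omega, Nat.sub_self,
    show n + 1 + 2 = n + 3 by omega, choose_one_right, choose_zero_right]
  rw [multinom_succ (n + 1), cast_centralBinom_succ (n + 1)]
  push_cast
  field_simp
  ring

theorem recP_ne_zero (n : ℕ) : recP n ≠ 0 := by
  unfold recP
  positivity

theorem stmt_3 (n : ℕ) :
    ∑ k ∈ Finset.range (n + 1),
      ((Nat.choose (6 * k) (3 * k) : ℤ) * (Nat.choose (3 * k) k) * (Nat.choose (2 * k) k) *
        (Nat.choose k (n - k)) * (-432) ^ (n - k))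
    = ∑ k ∈ Finset.range (n + 1),
      ((Nat.choose (6 * k) (3 * k) : ℤ) * (Nat.choose (3 * k) k) *
        (Nat.choose (6 * (n - k)) (3 * (n - k))) * (Nat.choose (3 * (n - k)) (n - k))) := by
  have key : ∑ k ∈ range (n + 1), lhsTerm n k = ∑ k ∈ range (n + 1), rhsTerm n k := by
    refine eq_of_recurrence_two (u := fun m => ∑ k ∈ range (m + 1), lhsTerm m k)
      (v := fun m => ∑ k ∈ range (m + 1), rhsTerm m k) recP_ne_zero
      (recurrence_sum_of_telescoping lhsTerm_telescoping lhsCert_zero lhsCert_boundary)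
      (recurrence_sum_of_telescoping rhsTerm_telescoping rhsCert_zero rhsCert_boundary) ?_ ?_ n
    · simp [lhsTerm, rhsTerm, multinom_zero]
    · norm_num [sum_range_succ, lhsTerm, rhsTerm, multinom_zero, multinom_one, centralBinom]
  rw [← Int.cast_inj (α := ℚ)]
  push_cast
  simpa only [lhsTerm, rhsTerm, multinom, centralBinom_eq_two_mul_choose, mul_assoc] using key
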